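/- arXiv:2507.00012 — 5 statements merged into one kernel-verified Lean document; each statement's English description precedes it below -/
import Mathlib

section
/- Let S be a nonempty finite set, C a positive integer, P : S → ℝ a probability mass function on S (P[x] ≥ 0, Σ_{x∈S} P[x] = 1), and for each x ∈ S let p_x ∈ ℝ^C be a probability vector with all entries positive. For every α > 0, the function I : (0,∞) → ℝ defined by I(α) = H(q^α) − Σ_{x∈S} P[x] H(p_x^α), where q^α = Σ_{x∈S} P[x] p_x^α, is differentiable at α and its derivative equals (1/α) · Σ_{x∈S} P[x] [ ( m2(p_x^α) − m1(p_x^α)² ) − Cov(p_x^α, q^α) ]. -/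
/-- Power transform of a probability vector: `p^α[j] = p[j]^α / ∑ i, p[i]^α`. -/
noncomputable def powT {C : ℕ} (p : Fin C → ℝ) (α : ℝ) : Fin C → ℝ :=
  fun j => p j ^ α / ∑ i, p i ^ α

/-- Shannon entropy `H(P) = −∑ j, P[j] ln P[j]`. -/
noncomputable def ent {C : ℕ} (P : Fin C → ℝ) : ℝ := -∑ j, P j * Real.log (P j)

/-- `m1(P) = ∑ j, P[j] (−ln P[j])`. -/
noncomputable def m1 {C : ℕ} (P : Fin C → ℝ) : ℝ := ∑ j, P j * (-Real.log (P j))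

/-- `m2(P) = ∑ j, P[j] (−ln P[j])²`. -/
noncomputable def m2 {C : ℕ} (P : Fin C → ℝ) : ℝ := ∑ j, P j * (-Real.log (P j)) ^ 2

/-- `Cov(P,Q) = ∑ j, P[j] (−ln P[j] − m1(P)) (−ln Q[j] − ∑ i, P[i] (−ln Q[i]))`. -/
noncomputable def cov {C : ℕ} (P Q : Fin C → ℝ) : ℝ :=
  ∑ j, P j * (-Real.log (P j) - m1 P) *
    (-Real.log (Q j) - ∑ i, P i * (-Real.log (Q i)))

lemma Zpos {C : ℕ} (hC : 0 < C) {p : Fin C → ℝ} (hp : ∀ j, 0 < p j) (α : ℝ) :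
    0 < ∑ i, p i ^ α :=
  Finset.sum_pos (fun i _ => Real.rpow_pos_of_pos (hp i) α)
    ⟨⟨0, hC⟩, Finset.mem_univ _⟩

lemma powT_pos {C : ℕ} (hC : 0 < C) {p : Fin C → ℝ} (hp : ∀ j, 0 < p j) (α : ℝ) (j : Fin C) :
    0 < powT p α j :=
  div_pos (Real.rpow_pos_of_pos (hp j) α) (Zpos hC hp α)

lemma powT_sum {C : ℕ} (hC : 0 < C) {p : Fin C → ℝ} (hp : ∀ j, 0 < p j) (α : ℝ) :
    ∑ j, powT p α j = 1 := by
  unfold powT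
  rw [← Finset.sum_div, div_self (Zpos hC hp α).ne']

lemma log_powT {C : ℕ} (hC : 0 < C) {p : Fin C → ℝ} (hp : ∀ j, 0 < p j) (α : ℝ) (j : Fin C) :
    Real.log (powT p α j) = α * Real.log (p j) - Real.log (∑ i, p i ^ α) := by
  unfold powT
  rw [Real.log_div (Real.rpow_pos_of_pos (hp j) α).ne' (Zpos hC hp α).ne',
    Real.log_rpow (hp j)]

lemma hasDerivAt_powT {C : ℕ} (hC : 0 < C) {p : Fin C → ℝ} (hp : ∀ j, 0 < p j)
    {α : ℝ} (hα : 0 < α) (j : Fin C) :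
    HasDerivAt (fun a => powT p a j)
      ((1/α) * (powT p α j *
        (Real.log (powT p α j) - ∑ i, powT p α i * Real.log (powT p α i)))) α := by
  have hN : ∀ i : Fin C, HasDerivAt (fun a : ℝ => p i ^ a) (p i ^ α * Real.log (p i)) α :=
    fun i => (Real.hasStrictDerivAt_const_rpow (hp i) α).hasDerivAt
  have hD : HasDerivAt (fun a : ℝ => ∑ i, p i ^ a) (∑ i, p i ^ α * Real.log (p i)) α :=
    HasDerivAt.fun_sum (fun i _ => hN i)
  have hZ : (∑ i, p i ^ α) ≠ 0 := (Zpos hC hp α).ne'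
  have h := (hN j).fun_div hD hZ
  refine h.congr_deriv (Eq.symm ?_)
  have hsum : ∑ i, powT p α i * Real.log (powT p α i)
      = α * ((∑ i, p i ^ α * Real.log (p i)) / (∑ i, p i ^ α)) - Real.log (∑ i, p i ^ α) := by
    have : ∀ i : Fin C, powT p α i * Real.log (powT p α i)
        = α * (powT p α i * Real.log (p i)) - Real.log (∑ i, p i ^ α) * powT p α i := by
      intro i; rw [log_powT hC hp α i]; ring
    rw [Finset.sum_congr rfl (fun i _ => this i), Finset.sum_sub_distrib,
      ← Finset.mul_sum, ← Finset.mul_sum, powT_sum hC hp α]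
    have : ∑ i, powT p α i * Real.log (p i)
        = (∑ i, p i ^ α * Real.log (p i)) / (∑ i, p i ^ α) := by
      unfold powT
      rw [Finset.sum_div]
      exact Finset.sum_congr rfl fun i _ => by ring
    rw [this]; ring
  rw [hsum, log_powT hC hp α j]
  unfold powT
  field_simp
  ring

lemma m1_eq {C : ℕ} (hC : 0 < C) {p : Fin C → ℝ} (hp : ∀ j, 0 < p j) (α : ℝ) :
    m1 (powT p α) = -∑ j, powT p α j * Real.log (powT p α j) := by
  unfold m1
  rw [← Finset.sum_neg_distrib]
  exact Finset.sum_congr rfl fun j _ => by ring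

lemma hasDerivAt_entPow {C : ℕ} (hC : 0 < C) {p : Fin C → ℝ} (hp : ∀ j, 0 < p j)
    {α : ℝ} (hα : 0 < α) :
    HasDerivAt (fun a => ent (powT p a))
      (-((1/α) * (m2 (powT p α) - (m1 (powT p α)) ^ 2))) α := by
  have hterm : ∀ j : Fin C, HasDerivAt (fun a => powT p a j * Real.log (powT p a j))
      ((1/α) * (powT p α j *
        (Real.log (powT p α j) - ∑ i, powT p α i * Real.log (powT p α i)))
       * (Real.log (powT p α j) + 1)) α := by
    intro j
    have h1 := hasDerivAt_powT hC hp hα j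
    have h2 := h1.log (powT_pos hC hp α j).ne'
    have h3 := h1.fun_mul h2
    refine h3.congr_deriv (Eq.symm ?_)
    have hne := (powT_pos hC hp α j).ne'
    field_simp
  have h := (HasDerivAt.fun_sum (u := Finset.univ) (fun j _ => hterm j)).fun_neg
  have hfun : (fun a => ent (powT p a))
      = fun a => -∑ j, powT p a j * Real.log (powT p a j) := by
    funext a; rfl
  rw [hfun]
  refine h.congr_deriv (Eq.symm ?_)
  -- value identity
  set f := powT p α with hf
  set L : Fin C → ℝ := fun j => Real.log (f j) with hL
  set Sv : ℝ := ∑ j, f j * L j with hS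
  have e : ∀ j : Fin C, (1/α) * (f j * (L j - Sv)) * (L j + 1)
      = (1/α)*(f j * L j^2) + (1/α)*(f j * L j) - (1/α)*Sv*(f j * L j) - (1/α)*Sv*(f j) :=
    fun j => by ring
  rw [Finset.sum_congr rfl (fun j _ => e j), Finset.sum_sub_distrib, Finset.sum_sub_distrib,
    Finset.sum_add_distrib, ← Finset.mul_sum, ← Finset.mul_sum, ← Finset.mul_sum,
    ← Finset.mul_sum, powT_sum hC hp α]
  have hm1 : m1 f = -Sv := by rw [m1_eq hC hp α]
  have hm2 : m2 f = ∑ j, f j * L j ^ 2 := by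
    unfold m2
    exact Finset.sum_congr rfl fun j _ => by rw [neg_sq]
  rw [hm1, hm2]
  ring

lemma cov_eq {C : ℕ} (hC : 0 < C) {p : Fin C → ℝ} (hp : ∀ j, 0 < p j) (α : ℝ)
    (Q : Fin C → ℝ) :
    cov (powT p α) Q
      = (∑ j, powT p α j * Real.log (powT p α j) * Real.log (Q j))
        - (∑ j, powT p α j * Real.log (powT p α j)) * (∑ j, powT p α j * Real.log (Q j)) := by
  unfold cov
  rw [m1_eq hC hp α]
  have hν : (∑ i, powT p α i * (-Real.log (Q i)))
      = -(∑ i, powT p α i * Real.log (Q i)) := by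
    rw [← Finset.sum_neg_distrib]
    exact Finset.sum_congr rfl fun i _ => by ring
  rw [hν]
  have e : ∀ j : Fin C,
      powT p α j * (-Real.log (powT p α j) - -∑ i, powT p α i * Real.log (powT p α i)) *
        (-Real.log (Q j) - -∑ i, powT p α i * Real.log (Q i))
      = powT p α j * Real.log (powT p α j) * Real.log (Q j)
        - (∑ i, powT p α i * Real.log (Q i)) * (powT p α j * Real.log (powT p α j))
        - (∑ i, powT p α i * Real.log (powT p α i)) * (powT p α j * Real.log (Q j))
        + ((∑ i, powT p α i * Real.log (powT p α i)) * (∑ i, powT p α i * Real.log (Q i)))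
            * powT p α j := fun j => by ring
  rw [Finset.sum_congr rfl fun j _ => e j, Finset.sum_add_distrib, Finset.sum_sub_distrib,
    Finset.sum_sub_distrib, ← Finset.mul_sum, ← Finset.mul_sum, ← Finset.mul_sum,
    powT_sum hC hp α]
  ring

lemma Dsum_eq {C : ℕ} (hC : 0 < C) {p : Fin C → ℝ} (hp : ∀ j, 0 < p j) {α : ℝ}
    (hα : 0 < α) (Q : Fin C → ℝ) :
    ∑ j, (1/α) * (powT p α j *
        (Real.log (powT p α j) - ∑ i, powT p α i * Real.log (powT p α i)))
      * (Real.log (Q j) + 1)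
    = (1/α) * cov (powT p α) Q := by
  rw [cov_eq hC hp α Q]
  have e : ∀ j : Fin C,
      (1/α) * (powT p α j *
        (Real.log (powT p α j) - ∑ i, powT p α i * Real.log (powT p α i)))
      * (Real.log (Q j) + 1)
      = (1/α) * (powT p α j * Real.log (powT p α j) * Real.log (Q j))
        + (1/α) * (powT p α j * Real.log (powT p α j))
        - (1/α) * (∑ i, powT p α i * Real.log (powT p α i)) * (powT p α j * Real.log (Q j))
        - (1/α) * (∑ i, powT p α i * Real.log (powT p α i)) * powT p α j := fun j => by ring
  rw [Finset.sum_congr rfl fun j _ => e j, Finset.sum_sub_distrib, Finset.sum_sub_distrib,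
    Finset.sum_add_distrib, ← Finset.mul_sum, ← Finset.mul_sum, ← Finset.mul_sum,
    ← Finset.mul_sum, powT_sum hC hp α]
  ring

lemma hasDerivAt_entMix {S : Type*} [Fintype S] {C : ℕ} (hC : 0 < C)
    (P : S → ℝ) (hP : ∀ x, 0 ≤ P x) (hPsum : ∑ x, P x = 1)
    (p : S → Fin C → ℝ) (hp : ∀ x j, 0 < p x j) {α : ℝ} (hα : 0 < α) :
    HasDerivAt (fun a => ent (fun j => ∑ x, P x * powT (p x) a j))
      (-∑ x, P x * ((1/α) * cov (powT (p x) α)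
        (fun j => ∑ x', P x' * powT (p x') α j))) α := by
  have hex : ∃ x, 0 < P x := by
    by_contra hno
    push_neg at hno
    have hz : ∑ x, P x = 0 :=
      Finset.sum_eq_zero fun x _ => le_antisymm (hno x) (hP x)
    rw [hz] at hPsum
    exact zero_ne_one hPsum
  obtain ⟨x0, hx0⟩ := hex
  have hqpos : ∀ j, 0 < ∑ x, P x * powT (p x) α j := by
    intro j
    exact Finset.sum_pos' (fun x _ => mul_nonneg (hP x) (powT_pos hC (hp x) α j).le)
      ⟨x0, Finset.mem_univ _, mul_pos hx0 (powT_pos hC (hp x0) α j)⟩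
  have hqder : ∀ j, HasDerivAt (fun a => ∑ x, P x * powT (p x) a j)
      (∑ x, P x * ((1/α) * (powT (p x) α j *
        (Real.log (powT (p x) α j) - ∑ i, powT (p x) α i * Real.log (powT (p x) α i))))) α :=
    fun j => HasDerivAt.fun_sum fun x _ => (hasDerivAt_powT hC (hp x) hα j).const_mul (P x)
  have hterm : ∀ j : Fin C, HasDerivAt
      (fun a => (∑ x, P x * powT (p x) a j) * Real.log (∑ x, P x * powT (p x) a j))
      ((∑ x, P x * ((1/α) * (powT (p x) α j *
          (Real.log (powT (p x) α j) - ∑ i, powT (p x) α i * Real.log (powT (p x) α i)))))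
        * (Real.log (∑ x, P x * powT (p x) α j) + 1)) α := by
    intro j
    have h1 := hqder j
    have h2 := h1.log (hqpos j).ne'
    have h3 := h1.fun_mul h2
    refine h3.congr_deriv (Eq.symm ?_)
    have hne := (hqpos j).ne'
    field_simp
  have h := (HasDerivAt.fun_sum (u := Finset.univ) (fun j _ => hterm j)).fun_neg
  have hfun : (fun a => ent (fun j => ∑ x, P x * powT (p x) a j))
      = fun a => -∑ j, (∑ x, P x * powT (p x) a j) * Real.log (∑ x, P x * powT (p x) a j) := by
    funext a; rfl
  rw [hfun]
  refine h.congr_deriv (Eq.symm ?_)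
  congr 1
  -- value identity (inside the neg)
  have h1 : ∀ j : Fin C, (∑ x, P x * ((1/α) * (powT (p x) α j *
      (Real.log (powT (p x) α j) - ∑ i, powT (p x) α i * Real.log (powT (p x) α i)))))
      * (Real.log (∑ x, P x * powT (p x) α j) + 1)
      = ∑ x, P x * ((1/α) * (powT (p x) α j *
          (Real.log (powT (p x) α j) - ∑ i, powT (p x) α i * Real.log (powT (p x) α i)))
        * (Real.log (∑ x, P x * powT (p x) α j) + 1)) := by
    intro j
    rw [Finset.sum_mul]
    exact Finset.sum_congr rfl fun x _ => by ring
  rw [Finset.sum_congr rfl fun j (_ : j ∈ Finset.univ) => h1 j, Finset.sum_comm]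
  refine Finset.sum_congr rfl fun x _ => ?_
  rw [← Dsum_eq hC (hp x) hα (fun j => ∑ x', P x' * powT (p x') α j), Finset.mul_sum]


/-- with `q^α = ∑ x, P[x] p_x^α`, for every `α > 0` the function
`I(α) = H(q^α) − ∑ x, P[x] H(p_x^α)` is differentiable at `α` with derivative
`(1/α) · ∑ x, P[x] [ (m2(p_x^α) − m1(p_x^α)²) − Cov(p_x^α, q^α) ]`. -/
theorem stmt0 {S : Type*} [Fintype S] [Nonempty S] {C : ℕ} (hC : 0 < C)
    (P : S → ℝ) (hP : ∀ x, 0 ≤ P x) (hPsum : ∑ x, P x = 1)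
    (p : S → Fin C → ℝ) (hp : ∀ x j, 0 < p x j) (hpsum : ∀ x, ∑ j, p x j = 1) :
    ∀ α : ℝ, 0 < α →
      HasDerivAt
        (fun a : ℝ =>
          ent (fun j => ∑ x, P x * powT (p x) a j) - ∑ x, P x * ent (powT (p x) a))
        ((1 / α) *
          ∑ x, P x *
            ((m2 (powT (p x) α) - (m1 (powT (p x) α)) ^ 2) -
              cov (powT (p x) α) (fun j => ∑ x', P x' * powT (p x') α j))) α := by
  intro α hα
  have hB := hasDerivAt_entMix hC P hP hPsum p hp hα
  have hA : HasDerivAt (fun a => ∑ x, P x * ent (powT (p x) a))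
      (∑ x, P x * (-((1/α) * (m2 (powT (p x) α) - (m1 (powT (p x) α)) ^ 2)))) α :=
    HasDerivAt.fun_sum fun x _ => (hasDerivAt_entPow hC (hp x) hα).const_mul (P x)
  have h := hB.fun_sub hA
  refine h.congr_deriv (Eq.symm ?_)
  rw [Finset.mul_sum, ← Finset.sum_neg_distrib, ← Finset.sum_sub_distrib]
  exact Finset.sum_congr rfl fun x _ => by ring
end

section
/- Let β > 0 and let g : ℝ → ℝ be continuously differentiable on the closed interval [0, β]. Then lim_{ω→∞} (1/ω) · ln( (1/β) · ∫_0^β exp(ω · g(t)) dt ) = max_{t ∈ [0,β]} g(t) (the maximum exists since g is continuous on the compact interval [0,β]). -/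
open Filter

/-- for `β > 0` and `g` continuously differentiable on `[0, β]`,
`lim_{ω→∞} (1/ω) ln((1/β) ∫_0^β exp(ω g(t)) dt)` equals the maximum of `g` on
`[0, β]` (which exists since `g` is continuous on the compact interval). -/
theorem stmt1 (β : ℝ) (hβ : 0 < β) (g : ℝ → ℝ)
    (hg : ContDiffOn ℝ 1 g (Set.Icc 0 β))
    (M : ℝ) (hM : IsGreatest (g '' Set.Icc 0 β) M) :
    Tendsto
      (fun ω : ℝ => (1 / ω) * Real.log ((1 / β) * ∫ t in (0:ℝ)..β, Real.exp (ω * g t)))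
      atTop (nhds M) := by
  have hgc : ContinuousOn g (Set.Icc 0 β) := hg.continuousOn
  obtain ⟨⟨t₀, ht₀, hgt₀⟩, hub⟩ := hM
  have hub' : ∀ t ∈ Set.Icc (0:ℝ) β, g t ≤ M := fun t ht => hub ⟨t, ht, rfl⟩
  -- integrability of the integrand on any subinterval
  have hcont : ∀ ω : ℝ, ContinuousOn (fun t => Real.exp (ω * g t)) (Set.Icc 0 β) :=
    fun ω => Real.continuous_exp.comp_continuousOn (continuousOn_const.mul hgc)
  have hInt : ∀ ω : ℝ, IntervalIntegrable (fun t => Real.exp (ω * g t)) MeasureTheory.volume 0 β :=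
    fun ω => ContinuousOn.intervalIntegrable (by rw [Set.uIcc_of_le hβ.le]; exact hcont ω)
  -- positivity of the integral
  have hIntPos : ∀ ω : ℝ, 0 < ∫ t in (0:ℝ)..β, Real.exp (ω * g t) := by
    intro ω
    exact intervalIntegral.intervalIntegral_pos_of_pos (hInt ω) (fun x => Real.exp_pos _) hβ
  have hXpos : ∀ ω : ℝ, 0 < (1 / β) * ∫ t in (0:ℝ)..β, Real.exp (ω * g t) :=
    fun ω => mul_pos (by positivity) (hIntPos ω)
  rw [tendsto_order]
  constructor
  · -- lower bound
    intro a ha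
    set ε : ℝ := (M - a) / 2 with hεdef
    have hεpos : 0 < ε := by simp only [hεdef]; linarith
    have hcw : ContinuousWithinAt g (Set.Icc 0 β) t₀ := hgc t₀ ht₀
    obtain ⟨η, hη, hball⟩ := Metric.continuousWithinAt_iff.1 hcw ε hεpos
    set c : ℝ := max 0 (t₀ - η / 2) with hcdef
    set d : ℝ := min β (t₀ + η / 2) with hddef
    have h0c : (0:ℝ) ≤ c := le_max_left _ _
    have hdβ : d ≤ β := min_le_left _ _
    have hcd : c < d := by
      have h1 : 0 < t₀ + η / 2 := by have := ht₀.1; linarith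
      have h2 : t₀ - η / 2 < β := by have := ht₀.2; linarith
      have h3 : t₀ - η / 2 < t₀ + η / 2 := by linarith
      simp only [hcdef, hddef, lt_min_iff, max_lt_iff]
      exact ⟨⟨hβ, h2⟩, ⟨h1, h3⟩⟩
    have hglow : ∀ t ∈ Set.Icc c d, M - ε ≤ g t := by
      intro t ht
      have htI : t ∈ Set.Icc (0:ℝ) β := ⟨h0c.trans ht.1, ht.2.trans hdβ⟩
      have hc' : t₀ - η / 2 ≤ c := le_max_right _ _
      have hd' : d ≤ t₀ + η / 2 := min_le_right _ _
      have hdist : dist t t₀ < η := by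
        rw [Real.dist_eq, abs_lt]
        constructor
        · have := hc'.trans ht.1; linarith
        · have := ht.2.trans hd'; linarith
      have := hball htI hdist
      rw [Real.dist_eq, hgt₀, abs_lt] at this
      linarith [this.1]
    set L : ℝ := Real.log ((d - c) / β) with hLdef
    -- for ω > 0, F ω ≥ (M - ε) + L / ω
    have hlow : ∀ ω : ℝ, 0 < ω →
        (M - ε) + L / ω ≤ (1 / ω) * Real.log ((1 / β) * ∫ t in (0:ℝ)..β, Real.exp (ω * g t)) := by
      intro ω hω
      have hIntcd : IntervalIntegrable (fun t => Real.exp (ω * g t)) MeasureTheory.volume c d := by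
        apply ((hcont ω).mono _).intervalIntegrable
        rw [Set.uIcc_of_le hcd.le]
        exact Set.Icc_subset_Icc h0c hdβ
      have h1 : (d - c) * Real.exp (ω * (M - ε)) ≤ ∫ t in c..d, Real.exp (ω * g t) := by
        have := intervalIntegral.integral_mono_on (f := fun _ : ℝ => Real.exp (ω * (M - ε)))
          (g := fun t => Real.exp (ω * g t)) hcd.le
          (intervalIntegrable_const) hIntcd
          (fun x hx => Real.exp_le_exp.2 (by
            have := hglow x hx
            nlinarith))
        simpa using this
      have h2 : (∫ t in c..d, Real.exp (ω * g t)) ≤ ∫ t in (0:ℝ)..β, Real.exp (ω * g t) :=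
        intervalIntegral.integral_mono_interval h0c hcd.le hdβ
          (Filter.Eventually.of_forall fun x => (Real.exp_pos _).le) (hInt ω)
      have h3 : ((d - c) / β) * Real.exp (ω * (M - ε)) ≤
          (1 / β) * ∫ t in (0:ℝ)..β, Real.exp (ω * g t) := by
        have h12 : (d - c) * Real.exp (ω * (M - ε)) ≤ ∫ t in (0:ℝ)..β, Real.exp (ω * g t) :=
          h1.trans h2
        calc ((d - c) / β) * Real.exp (ω * (M - ε))
            = (1 / β) * ((d - c) * Real.exp (ω * (M - ε))) := by ring
          _ ≤ (1 / β) * ∫ t in (0:ℝ)..β, Real.exp (ω * g t) :=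
              mul_le_mul_of_nonneg_left h12 (by positivity)
      have hpos1 : 0 < ((d - c) / β) * Real.exp (ω * (M - ε)) := by
        have hdc : 0 < d - c := by linarith
        exact mul_pos (div_pos hdc hβ) (Real.exp_pos _)
      have hlog : L + ω * (M - ε) ≤
          Real.log ((1 / β) * ∫ t in (0:ℝ)..β, Real.exp (ω * g t)) := by
        have := Real.log_le_log hpos1 h3
        rwa [Real.log_mul (ne_of_gt (div_pos (by linarith : (0:ℝ) < d - c) hβ)) (Real.exp_pos _).ne', Real.log_exp] at this
      have : (1 / ω) * (L + ω * (M - ε)) ≤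
          (1 / ω) * Real.log ((1 / β) * ∫ t in (0:ℝ)..β, Real.exp (ω * g t)) :=
        mul_le_mul_of_nonneg_left hlog (by positivity)
      calc (M - ε) + L / ω = (1 / ω) * (L + ω * (M - ε)) := by field_simp; ring
        _ ≤ _ := this
    -- the lower bound tends to M - ε > a
    have htend : Tendsto (fun ω : ℝ => (M - ε) + L / ω) atTop (nhds (M - ε)) := by
      have : Tendsto (fun ω : ℝ => L / ω) atTop (nhds 0) :=
        tendsto_const_nhds.div_atTop tendsto_id
      simpa using tendsto_const_nhds.add this
    have haM : a < M - ε := by simp only [hεdef]; linarith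
    filter_upwards [htend.eventually (eventually_gt_nhds haM), eventually_gt_atTop (0:ℝ)]
      with ω h1 h2
    exact h1.trans_le (hlow ω h2)
  · -- upper bound
    intro a ha
    filter_upwards [eventually_gt_atTop (0:ℝ)] with ω hω
    have hle : (∫ t in (0:ℝ)..β, Real.exp (ω * g t)) ≤ β * Real.exp (ω * M) := by
      have := intervalIntegral.integral_mono_on (f := fun t => Real.exp (ω * g t))
        (g := fun _ : ℝ => Real.exp (ω * M)) hβ.le (hInt ω) intervalIntegrable_const
        (fun x hx => Real.exp_le_exp.2 (mul_le_mul_of_nonneg_left (hub' x hx) hω.le))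
      simpa using this
    have hle2 : (1 / β) * (∫ t in (0:ℝ)..β, Real.exp (ω * g t)) ≤ Real.exp (ω * M) := by
      rw [one_div, inv_mul_le_iff₀ hβ]
      linarith
    have hlog : Real.log ((1 / β) * ∫ t in (0:ℝ)..β, Real.exp (ω * g t)) ≤ ω * M := by
      have := Real.log_le_log (hXpos ω) hle2
      rwa [Real.log_exp] at this
    have : (1 / ω) * Real.log ((1 / β) * ∫ t in (0:ℝ)..β, Real.exp (ω * g t)) ≤ M := by
      calc (1 / ω) * Real.log ((1 / β) * ∫ t in (0:ℝ)..β, Real.exp (ω * g t))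
          ≤ (1 / ω) * (ω * M) := mul_le_mul_of_nonneg_left hlog (by positivity)
        _ = M := by field_simp
    exact this.trans_lt ha
end

section
/- Let C be a positive integer and p ∈ ℝ^C a probability vector with all entries positive. Then for every α > 0, the function α ↦ H(p^α) is differentiable at α and its derivative equals −(1/α) · ( m2(p^α) − m1(p^α)² ). -/
/-- for a probability vector `p` with positive entries and `α > 0`,
the map `α ↦ H(p^α)` is differentiable at `α` with derivative
`−(1/α) · (m2(p^α) − m1(p^α)²)`. -/
theorem stmt3 {C : ℕ} (hC : 0 < C) (p : Fin C → ℝ)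
    (hp : ∀ j, 0 < p j) (hpsum : ∑ j, p j = 1) :
    ∀ α : ℝ, 0 < α →
      HasDerivAt (fun a : ℝ => ent (powT p a))
        (-(1 / α) * (m2 (powT p α) - (m1 (powT p α)) ^ 2)) α := by
  intro α hα
  have hne : (Finset.univ : Finset (Fin C)).Nonempty := ⟨⟨0, hC⟩, Finset.mem_univ _⟩
  set S : ℝ → ℝ := fun a => ∑ i, p i ^ a with hSdef
  set T : ℝ → ℝ := fun a => ∑ i, p i ^ a * Real.log (p i) with hTdef
  set U : ℝ → ℝ := fun a => ∑ i, p i ^ a * Real.log (p i) ^ 2 with hUdef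
  have hSpos : ∀ a, 0 < S a := fun a =>
    Finset.sum_pos (fun i _ => Real.rpow_pos_of_pos (hp i) a) hne
  have hDi : ∀ (i : Fin C) (a : ℝ),
      HasDerivAt (fun x : ℝ => p i ^ x) (p i ^ a * Real.log (p i)) a := fun i a =>
    (Real.hasStrictDerivAt_const_rpow (hp i) a).hasDerivAt
  have hDS : ∀ a, HasDerivAt S (T a) a := fun a =>
    HasDerivAt.fun_sum (fun i _ => hDi i a)
  have hDT : ∀ a, HasDerivAt T (U a) a := by
    intro a
    have : HasDerivAt T (∑ i, p i ^ a * Real.log (p i) * Real.log (p i)) a :=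
      HasDerivAt.fun_sum (fun i _ => (hDi i a).mul_const (Real.log (p i)))
    convert this using 1
    exact Finset.sum_congr rfl fun i _ => by ring
  -- closed form for the entropy
  have hfe : ∀ a : ℝ, ent (powT p a) = Real.log (S a) - a * (T a / S a) := by
    intro a
    have hterm : ∀ j : Fin C, powT p a j * Real.log (powT p a j)
        = (a * (p j ^ a * Real.log (p j)) - Real.log (S a) * p j ^ a) / S a := by
      intro j
      show p j ^ a / S a * Real.log (p j ^ a / S a) = _
      rw [Real.log_div (Real.rpow_pos_of_pos (hp j) a).ne' (hSpos a).ne',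
        Real.log_rpow (hp j)]
      field_simp
    unfold ent
    rw [Finset.sum_congr rfl (fun j _ => hterm j), ← Finset.sum_div,
      Finset.sum_sub_distrib, ← Finset.mul_sum, ← Finset.mul_sum]
    have h1 : (∑ j, p j ^ a) = S a := rfl
    have h2 : (∑ j, p j ^ a * Real.log (p j)) = T a := rfl
    rw [h1, h2]
    field_simp [(hSpos _).ne']
    ring
  -- derivative of the closed form
  have hD : HasDerivAt (fun a : ℝ => Real.log (S a) - a * (T a / S a))
      (T α / S α - (1 * (T α / S α)
        + α * ((U α * S α - T α * T α) / S α ^ 2))) α := by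
    have h1 : HasDerivAt (fun a => Real.log (S a)) (T α / S α) α :=
      (hDS α).log (hSpos α).ne'
    have h2 : HasDerivAt (fun a : ℝ => a * (T a / S a))
        (1 * (T α / S α) + α * ((U α * S α - T α * T α) / S α ^ 2)) α :=
      (hasDerivAt_id α).mul ((hDT α).div (hDS α) (hSpos α).ne')
    exact h1.sub h2
  have hlogq : ∀ j : Fin C, Real.log (powT p α j)
      = α * Real.log (p j) - Real.log (S α) := by
    intro j
    show Real.log (p j ^ α / S α) = _
    rw [Real.log_div (Real.rpow_pos_of_pos (hp j) α).ne' (hSpos α).ne',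
      Real.log_rpow (hp j)]
  have hm1 : m1 (powT p α) = Real.log (S α) - α * (T α / S α) := by
    have hterm : ∀ j : Fin C, powT p α j * (-Real.log (powT p α j))
        = (Real.log (S α) * p j ^ α - α * (p j ^ α * Real.log (p j))) / S α := by
      intro j
      rw [hlogq j]
      show p j ^ α / S α * _ = _
      field_simp
      ring
    unfold m1
    rw [Finset.sum_congr rfl (fun j _ => hterm j), ← Finset.sum_div,
      Finset.sum_sub_distrib, ← Finset.mul_sum, ← Finset.mul_sum]
    have h1 : (∑ j, p j ^ α) = S α := rfl
    have h2 : (∑ j, p j ^ α * Real.log (p j)) = T α := rfl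
    rw [h1, h2]
    field_simp [(hSpos _).ne']
  have hm2 : m2 (powT p α) = Real.log (S α) ^ 2
      - 2 * α * Real.log (S α) * (T α / S α) + α ^ 2 * (U α / S α) := by
    have hterm : ∀ j : Fin C, powT p α j * (-Real.log (powT p α j)) ^ 2
        = (Real.log (S α) ^ 2 * p j ^ α
          - 2 * α * Real.log (S α) * (p j ^ α * Real.log (p j))
          + α ^ 2 * (p j ^ α * Real.log (p j) ^ 2)) / S α := by
      intro j
      rw [hlogq j]
      show p j ^ α / S α * _ = _
      field_simp
      ring
    unfold m2
    rw [Finset.sum_congr rfl (fun j _ => hterm j), ← Finset.sum_div,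
      Finset.sum_add_distrib, Finset.sum_sub_distrib,
      ← Finset.mul_sum, ← Finset.mul_sum, ← Finset.mul_sum]
    have h1 : (∑ j, p j ^ α) = S α := rfl
    have h2 : (∑ j, p j ^ α * Real.log (p j)) = T α := rfl
    have h3 : (∑ j, p j ^ α * Real.log (p j) ^ 2) = U α := rfl
    rw [h1, h2, h3]
    field_simp [(hSpos _).ne']
  have hfinal : -(1 / α) * (m2 (powT p α) - (m1 (powT p α)) ^ 2)
      = T α / S α - (1 * (T α / S α)
        + α * ((U α * S α - T α * T α) / S α ^ 2)) := by
    rw [hm1, hm2]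
    field_simp [(hSpos α).ne', hα.ne']
    ring
  rw [hfinal]
  exact hD.congr_of_eventuallyEq (Filter.Eventually.of_forall fun a => hfe a)
end

section
/- Let β > 0 and let g : ℝ → ℝ be continuous on the closed interval [0, β]. Then liminf_{ω→∞} (1/ω) · ln( (1/β) · ∫_0^β exp(ω · g(t)) dt ) ≥ max_{t ∈ [0,β]} g(t). -/
open Filter

/-- for `β > 0` and `g` continuous on `[0, β]`,
`liminf_{ω→∞} (1/ω) ln((1/β) ∫_0^β exp(ω g(t)) dt) ≥ max_{t ∈ [0,β]} g(t)`. -/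
theorem stmt8 (β : ℝ) (hβ : 0 < β) (g : ℝ → ℝ)
    (hg : ContinuousOn g (Set.Icc 0 β))
    (M : ℝ) (hM : IsGreatest (g '' Set.Icc 0 β) M) :
    M ≤
      Filter.liminf
        (fun ω : ℝ =>
          (1 / ω) * Real.log ((1 / β) * ∫ t in (0:ℝ)..β, Real.exp (ω * g t)))
        atTop := by
  obtain ⟨⟨t0, ht0, hgt0⟩, hub⟩ := hM
  set u := fun ω : ℝ =>
    (1 / ω) * Real.log ((1 / β) * ∫ t in (0:ℝ)..β, Real.exp (ω * g t)) with hudef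
  have hint : ∀ ω : ℝ, IntervalIntegrable (fun t => Real.exp (ω * g t))
      MeasureTheory.volume 0 β := by
    intro ω
    apply ContinuousOn.intervalIntegrable
    rw [Set.uIcc_of_le hβ.le]
    exact Real.continuous_exp.comp_continuousOn (continuousOn_const.mul hg)
  have hipos : ∀ ω : ℝ, 0 < ∫ t in (0:ℝ)..β, Real.exp (ω * g t) := by
    intro ω
    exact intervalIntegral.intervalIntegral_pos_of_pos (hint ω)
      (fun x => Real.exp_pos _) hβ
  -- eventual upper bound : u ω ≤ M for ω > 0
  have hupper : ∀ ω : ℝ, 0 < ω → u ω ≤ M := by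
    intro ω hω
    have h1 : (∫ t in (0:ℝ)..β, Real.exp (ω * g t)) ≤ β * Real.exp (ω * M) := by
      have := intervalIntegral.integral_mono_on (μ := MeasureTheory.volume) hβ.le (hint ω)
        (intervalIntegrable_const (c := Real.exp (ω * M)))
        (fun t ht => Real.exp_le_exp.2
          (mul_le_mul_of_nonneg_left (hub ⟨t, ht, rfl⟩) hω.le))
      simpa using this
    have h2 : (1 / β) * ∫ t in (0:ℝ)..β, Real.exp (ω * g t) ≤ Real.exp (ω * M) := by
      rw [div_mul_eq_mul_div, one_mul, div_le_iff₀' hβ]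
      exact h1
    have h3 : Real.log ((1 / β) * ∫ t in (0:ℝ)..β, Real.exp (ω * g t)) ≤ ω * M := by
      calc Real.log ((1 / β) * ∫ t in (0:ℝ)..β, Real.exp (ω * g t))
          ≤ Real.log (Real.exp (ω * M)) :=
            Real.log_le_log (mul_pos (by positivity) (hipos ω)) h2
        _ = ω * M := Real.log_exp _
    calc u ω ≤ (1 / ω) * (ω * M) :=
          mul_le_mul_of_nonneg_left h3 (by positivity)
      _ = M := by field_simp
  have hcobdd : IsCoboundedUnder (· ≥ ·) atTop u :=
    Filter.isCoboundedUnder_ge_of_eventually_le atTop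
      ((eventually_gt_atTop 0).mono fun ω hω => hupper ω hω)
  -- main: for every ε > 0, M - ε ≤ liminf
  apply le_of_forall_sub_le
  intro ε hε
  -- find a subinterval [a,b] ⊆ [0,β] of positive length where g ≥ M - ε/2
  obtain ⟨r, hr, hball⟩ : ∃ r > 0, ∀ t ∈ Set.Icc 0 β, |t - t0| < r → M - ε / 2 < g t := by
    have := (Metric.continuousWithinAt_iff.1 (hg t0 ht0)) (ε / 2) (by positivity)
    obtain ⟨r, hr, h⟩ := this
    refine ⟨r, hr, fun t ht hdist => ?_⟩
    have := h ht (by simpa [Real.dist_eq] using hdist)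
    rw [Real.dist_eq, hgt0] at this
    have := abs_lt.1 this
    linarith [this.1]
  set a := max 0 (t0 - r / 2) with ha
  set b := min β (t0 + r / 2) with hb
  have ha0 : 0 ≤ a := le_max_left _ _
  have hbβ : b ≤ β := min_le_left _ _
  have hat0 : a ≤ t0 := max_le ht0.1 (by linarith)
  have ht0b : t0 ≤ b := le_min ht0.2 (by linarith)
  have hab : a < b := by
    rcases lt_or_eq_of_le ht0.2 with h | h
    · have : t0 < b := lt_min h (by linarith)
      exact lt_of_le_of_lt hat0 this
    · have : a < t0 := max_lt (h ▸ hβ) (by linarith)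
      exact lt_of_lt_of_le this ht0b
  have hsub : ∀ t ∈ Set.Icc a b, M - ε / 2 ≤ g t := by
    intro t ht
    have h1 : t ∈ Set.Icc 0 β := ⟨le_trans ha0 ht.1, le_trans ht.2 hbβ⟩
    have h2 : |t - t0| < r := by
      rw [abs_lt]
      constructor
      · have h3 : t0 - r / 2 ≤ a := le_max_right _ _
        have h4 := ht.1
        linarith
      · have : b ≤ t0 + r / 2 := min_le_right _ _
        have := ht.2
        linarith
    exact (hball t h1 h2).le
  set δ := b - a with hδ
  have hδpos : 0 < δ := by simpa [hδ] using sub_pos.2 hab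
  set c := Real.log (δ / β) with hc
  -- lower bound for u ω for ω > 0
  have hlow : ∀ ω : ℝ, 0 < ω → M - ε / 2 + c * (1 / ω) ≤ u ω := by
    intro ω hω
    have hi1 : δ * Real.exp (ω * (M - ε / 2)) ≤ ∫ t in a..b, Real.exp (ω * g t) := by
      have := intervalIntegral.integral_mono_on (μ := MeasureTheory.volume) hab.le
        (intervalIntegrable_const (c := Real.exp (ω * (M - ε / 2))))
        (((hint ω).mono_set (by
          rw [Set.uIcc_of_le hab.le, Set.uIcc_of_le hβ.le]
          exact Set.Icc_subset_Icc ha0 hbβ)))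
        (fun t ht => Real.exp_le_exp.2 (mul_le_mul_of_nonneg_left (hsub t ht) hω.le))
      simpa [hδ, mul_comm] using this
    have hi2 : (∫ t in a..b, Real.exp (ω * g t)) ≤ ∫ t in (0:ℝ)..β, Real.exp (ω * g t) :=
      intervalIntegral.integral_mono_interval ha0 hab.le hbβ
        (Filter.Eventually.of_forall fun t => (Real.exp_pos _).le) (hint ω)
    have hi3 : (δ / β) * Real.exp (ω * (M - ε / 2)) ≤
        (1 / β) * ∫ t in (0:ℝ)..β, Real.exp (ω * g t) := by
      rw [div_mul_eq_mul_div, div_mul_eq_mul_div, one_mul, div_le_div_iff_of_pos_right hβ]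
      exact le_trans hi1 hi2
    have hlog : c + ω * (M - ε / 2) ≤
        Real.log ((1 / β) * ∫ t in (0:ℝ)..β, Real.exp (ω * g t)) := by
      have hlhs : 0 < (δ / β) * Real.exp (ω * (M - ε / 2)) := by positivity
      calc c + ω * (M - ε / 2)
          = Real.log ((δ / β) * Real.exp (ω * (M - ε / 2))) := by
            rw [Real.log_mul (by positivity) (Real.exp_ne_zero _), Real.log_exp, hc]
        _ ≤ _ := Real.log_le_log hlhs hi3
    have := mul_le_mul_of_nonneg_left hlog (le_of_lt (one_div_pos.2 hω))
    calc M - ε / 2 + c * (1 / ω) = (1 / ω) * (c + ω * (M - ε / 2)) := by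
          field_simp; ring
      _ ≤ u ω := this
  -- eventually u ω ≥ M - ε
  have htend : Filter.Tendsto (fun ω : ℝ => c * (1 / ω)) atTop (nhds 0) := by
    have : Filter.Tendsto (fun ω : ℝ => (1 : ℝ) / ω) atTop (nhds 0) := by
      simpa [one_div] using (tendsto_inv_atTop_zero : Filter.Tendsto (fun x : ℝ => x⁻¹) atTop (nhds 0))
    simpa using tendsto_const_nhds.mul this
  have hev : ∀ᶠ ω in atTop, M - ε ≤ u ω := by
    have h1 : ∀ᶠ ω in atTop, -(ε / 2) < c * (1 / ω) :=
      htend.eventually (eventually_gt_nhds (by linarith))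
    filter_upwards [h1, eventually_gt_atTop (0 : ℝ)] with ω hω1 hω2
    have := hlow ω hω2
    linarith
  exact Filter.le_liminf_of_le hcobdd hev
end

section
/- Let S be a nonempty finite set, C a positive integer, P : S → ℝ a probability mass function on S (P[x] ≥ 0, Σ_{x∈S} P[x] = 1), and for each x ∈ S let p_x ∈ ℝ^C be a probability vector with all entries positive. Then the function I : (0,∞) → ℝ defined by I(α) = H(q^α) − Σ_{x∈S} P[x] H(p_x^α), where q^α = Σ_{x∈S} P[x] p_x^α, is continuously differentiable on (0,∞). -/
lemma contDiff_rpow_const_base {c : ℝ} (hc : 0 < c) :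
    ContDiff ℝ 1 (fun a : ℝ => c ^ a) := by
  have h : (fun a : ℝ => c ^ a) = fun a => Real.exp (Real.log c * a) := by
    funext a; rw [Real.rpow_def_of_pos hc]
  rw [h]
  exact Real.contDiff_exp.comp (contDiff_const.mul contDiff_id)

lemma entAux {C : ℕ} {g : Fin C → ℝ → ℝ} {a : ℝ}
    (hg : ∀ j, ContDiffAt ℝ 1 (g j) a) (hpos : ∀ j, 0 < g j a) :
    ContDiffAt ℝ 1 (fun a => ent (fun j => g j a)) a := by
  unfold ent
  apply ContDiffAt.neg
  apply ContDiffAt.sum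
  intro j _
  exact (hg j).mul ((Real.contDiffAt_log.mpr (hpos j).ne').comp a (hg j))

/-- the function `I(α) = H(q^α) − ∑ x, P[x] H(p_x^α)`, where
`q^α = ∑ x, P[x] p_x^α`, is continuously differentiable on `(0, ∞)`. -/
theorem stmt12 {S : Type*} [Fintype S] [Nonempty S] {C : ℕ} (hC : 0 < C)
    (P : S → ℝ) (hP : ∀ x, 0 ≤ P x) (hPsum : ∑ x, P x = 1)
    (p : S → Fin C → ℝ) (hp : ∀ x j, 0 < p x j) (hpsum : ∀ x, ∑ j, p x j = 1) :
    ContDiffOn ℝ 1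
      (fun a : ℝ =>
        ent (fun j => ∑ x, P x * powT (p x) a j) - ∑ x, P x * ent (powT (p x) a))
      (Set.Ioi (0 : ℝ)) := by
  haveI : Nonempty (Fin C) := ⟨⟨0, hC⟩⟩
  have hsumpos : ∀ x (a : ℝ), 0 < ∑ i, p x i ^ a := fun x a =>
    Finset.sum_pos (fun i _ => Real.rpow_pos_of_pos (hp x i) a) Finset.univ_nonempty
  have hpowpos : ∀ x j (a : ℝ), 0 < powT (p x) a j := fun x j a =>
    div_pos (Real.rpow_pos_of_pos (hp x j) a) (hsumpos x a)
  have hpowcd : ∀ x j, ContDiff ℝ 1 (fun a => powT (p x) a j) := by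
    intro x j
    unfold powT
    exact (contDiff_rpow_const_base (hp x j)).div
      (ContDiff.sum fun i _ => contDiff_rpow_const_base (hp x i))
      (fun a => (hsumpos x a).ne')
  have hx0 : ∃ x, 0 < P x := by
    by_contra h
    push_neg at h
    have : (∑ x, P x) ≤ 0 := Finset.sum_nonpos fun x _ => h x
    linarith [hPsum]
  obtain ⟨x0, hx0⟩ := hx0
  have hqpos : ∀ j (a : ℝ), 0 < ∑ x, P x * powT (p x) a j := by
    intro j a
    apply Finset.sum_pos'
    · exact fun x _ => mul_nonneg (hP x) (hpowpos x j a).le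
    · exact ⟨x0, Finset.mem_univ x0, mul_pos hx0 (hpowpos x0 j a)⟩
  apply ContDiff.contDiffOn
  rw [contDiff_iff_contDiffAt]
  intro a
  apply ContDiffAt.sub
  · exact entAux (g := fun j a => ∑ x, P x * powT (p x) a j)
      (fun j => (ContDiff.sum fun x _ => contDiff_const.mul (hpowcd x j)).contDiffAt)
      (fun j => hqpos j a)
  · exact ContDiffAt.sum fun x _ => contDiffAt_const.mul
      (entAux (g := fun j a => powT (p x) a j)
        (fun j => (hpowcd x j).contDiffAt) (fun j => hpowpos x j a))
end
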